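/- Let z = (z_1,…,z_n) ∈ ℝ^n be strictly decreasing (z_1 > z_2 > ⋯ > z_n), and let φ_z be the map sending an n×n real matrix X to the row vector zX ∈ ℝ^n. Then the image of ASM_n under φ_z equals the permutohedron P_z, the convex hull of the n! vectors (z_{ω(1)},…,z_{ω(n)}) over all permutations ω of {1,…,n}. -/

import Mathlib

/-!
For an alternating sign matrix `A`, the partial column sums `∑_{i<k} A i j` lie in `[0, 1]`
(the nonzero entries of a column alternate `1, -1, …, 1`) and add up to `k` over `j`.
Hence, for every weight vector `c`, the `k`-th partial sum of `A c` is at most the sum of the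
`k` largest entries of `c`, with equality at `k = n`. Abel summation against the decreasing
vector `z` turns this into `⟨z A, c⟩ ≤ ⟨z ∘ σ⁻¹, c⟩`, where `σ` sorts `c` decreasingly; since
`c` is arbitrary, Hahn–Banach separation puts `z A` in `P_z`. Conversely, permutation matrices
are alternating sign matrices and `φ_z` maps them onto the vertices of `P_z`.
-/

open scoped BigOperators

/-- The nonzero entries of the vector `v` alternate in sign: any two nonzero
entries with only zeros strictly between them have opposite values. -/
def AlternatesSign {n : ℕ} (v : Fin n → ℝ) : Prop :=
  ∀ j₁ j₂ : Fin n, j₁ < j₂ → v j₁ ≠ 0 → v j₂ ≠ 0 →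
    (∀ k : Fin n, j₁ < k → k < j₂ → v k = 0) → v j₂ = -v j₁

/-- `A` is an `n × n` alternating sign matrix: entries in `{0, 1, -1}`, each row
and column sums to `1`, and the nonzero entries of each row and column
alternate in sign. -/
def IsASM (n : ℕ) (A : Matrix (Fin n) (Fin n) ℝ) : Prop :=
  (∀ i j, A i j = 0 ∨ A i j = 1 ∨ A i j = -1) ∧
  (∀ i, ∑ j, A i j = 1) ∧
  (∀ j, ∑ i, A i j = 1) ∧
  (∀ i, AlternatesSign (fun j => A i j)) ∧
  (∀ j, AlternatesSign (fun i => A i j))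

/-- The alternating sign matrix polytope: the convex hull of the ASMs. -/
def ASMPolytope (n : ℕ) : Set (Matrix (Fin n) (Fin n) ℝ) :=
  convexHull ℝ {A : Matrix (Fin n) (Fin n) ℝ | IsASM n A}

/-- The permutation matrix of `ω`, with a `1` in position `(i, ω i)`. -/
def permMatrix (n : ℕ) (ω : Equiv.Perm (Fin n)) : Matrix (Fin n) (Fin n) ℝ :=
  fun i j => if ω i = j then 1 else 0

/-- The Birkhoff polytope: the convex hull of the `n × n` permutation
matrices. -/
def BirkhoffPolytope (n : ℕ) : Set (Matrix (Fin n) (Fin n) ℝ) :=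
  convexHull ℝ {M : Matrix (Fin n) (Fin n) ℝ | ∃ ω : Equiv.Perm (Fin n), M = permMatrix n ω}

/-- The permutohedron `P_z`: the convex hull of all permutations of the
entries of `z`. -/
def permutohedron (n : ℕ) (z : Fin n → ℝ) : Set (Fin n → ℝ) :=
  convexHull ℝ {v : Fin n → ℝ | ∃ ω : Equiv.Perm (Fin n), v = z ∘ ω}

/-- The projection `φ_z`, sending a matrix `X` to the row vector `z X`. -/
def phiMap (n : ℕ) (z : Fin n → ℝ) (X : Matrix (Fin n) (Fin n) ℝ) : Fin n → ℝ :=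
  fun j => ∑ i, z i * X i j


open Finset Matrix

section PartialSum

variable {M : Type*} {n : ℕ}

def partialSum [AddCommMonoid M] (v : Fin n → M) (k : ℕ) : M :=
  ∑ i ∈ univ.filter (fun i : Fin n => (i : ℕ) < k), v i

theorem partialSum_zero [AddCommMonoid M] (v : Fin n → M) : partialSum v 0 = 0 := by
  simp [partialSum]

theorem partialSum_succ [AddCommMonoid M] (v : Fin n → M) {k : ℕ} (hk : k < n) :
    partialSum v (k + 1) = partialSum v k + v ⟨k, hk⟩ := by
  rw [partialSum, partialSum, add_comm (∑ i ∈ _, v i), ← sum_insert (by simp)]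
  congr 1
  ext i
  simp only [mem_filter, mem_univ, true_and, mem_insert, Fin.ext_iff]
  omega

theorem partialSum_of_le [AddCommMonoid M] (v : Fin n → M) {k : ℕ} (hk : n ≤ k) :
    partialSum v k = ∑ i, v i := by
  rw [partialSum, filter_true_of_mem fun i _ => i.2.trans_le hk]

theorem partialSum_sub [AddCommGroup M] (v w : Fin n → M) (k : ℕ) :
    partialSum (v - w) k = partialSum v k - partialSum w k :=
  sum_sub_distrib _ _

theorem partialSum_mulVec {ι R : Type*} [Fintype ι] [NonUnitalNonAssocSemiring R]
    (A : Matrix (Fin n) ι R) (c : ι → R) (k : ℕ) :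
    partialSum (A *ᵥ c) k = (fun j => partialSum (fun i => A i j) k) ⬝ᵥ c := by
  simp only [partialSum, mulVec, dotProduct, sum_mul]
  exact sum_comm

end PartialSum

section Rearrangement

variable {n : ℕ} {R : Type*} [CommRing R] [LinearOrder R] [IsStrictOrderedRing R]

theorem dotProduct_le_dotProduct_of_partialSum_le {z x y : Fin n → R} (hz : Antitone z)
    (hxy : ∀ k ≤ n, partialSum x k ≤ partialSum y k) (hsum : ∑ i, x i = ∑ i, y i) :
    z ⬝ᵥ x ≤ z ⬝ᵥ y := by
  set d := y - x
  have hd : ∀ k ≤ n, 0 ≤ partialSum d k := fun k hk => by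
    simpa [d, partialSum_sub] using hxy k hk
  -- Abel summation: `∑_{i<k} z i * d i ≥ z (k-1) * ∑_{i<k} d i`, with `β` standing in for
  -- `z (k-1)` so that `k = 0` is not special.
  have key : ∀ k ≤ n, ∀ β, (∀ i : Fin n, (i : ℕ) < k → β ≤ z i) →
      β * partialSum d k ≤ partialSum (fun i => z i * d i) k := by
    intro k
    induction k with
    | zero => simp [partialSum_zero]
    | succ k ih =>
      intro hk β hβ
      set p : Fin n := ⟨k, hk⟩
      have hIH := ih (Nat.le_of_succ_le hk) (z p) fun i hi => hz (Fin.le_def.2 hi.le)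
      calc β * partialSum d (k + 1) ≤ z p * partialSum d (k + 1) :=
            mul_le_mul_of_nonneg_right (hβ p (Nat.lt_succ_self k)) (hd _ hk)
        _ = z p * partialSum d k + z p * d p := by rw [partialSum_succ _ hk, mul_add]
        _ ≤ partialSum (fun i => z i * d i) k + z p * d p := by gcongr
        _ = partialSum (fun i => z i * d i) (k + 1) := (partialSum_succ _ hk).symm
  obtain ⟨β, hβ⟩ := (Set.finite_range z).bddBelow
  have := key n le_rfl β fun i _ => hβ ⟨i, rfl⟩
  rw [partialSum_of_le _ le_rfl, partialSum_of_le _ le_rfl] at this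
  simpa [d, dotProduct, mul_sub, sum_sub_distrib, hsum] using this

theorem dotProduct_le_sum_of_sum_eq_card {ι : Type*} [Fintype ι] {t c : ι → R} (ht0 : 0 ≤ t)
    (ht1 : t ≤ 1) {F : Finset ι} (ht : ∑ j, t j = #F) {b : R} (hF : ∀ j ∈ F, b ≤ c j)
    (hFc : ∀ j ∉ F, c j ≤ b) : t ⬝ᵥ c ≤ ∑ j ∈ F, c j := by
  classical
  -- termwise, `(𝟙_F j - t j) * (c j - b) ≥ 0`
  have term : ∀ j, t j * c j ≤ (if j ∈ F then c j else 0) + b * (t j - if j ∈ F then 1 else 0) := by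
    intro j
    split_ifs with hj
    · nlinarith [hF j hj, show t j ≤ 1 from ht1 j]
    · nlinarith [hFc j hj, show 0 ≤ t j from ht0 j]
  calc t ⬝ᵥ c ≤ ∑ j, ((if j ∈ F then c j else 0) + b * (t j - if j ∈ F then 1 else 0)) :=
        sum_le_sum fun j _ => term j
    _ = ∑ j ∈ F, c j := by simp [sum_add_distrib, ← mul_sum, sum_sub_distrib, ht]

theorem dotProduct_le_partialSum {c t : Fin n → R} (hc : Antitone c) (ht0 : 0 ≤ t) (ht1 : t ≤ 1)
    {k : ℕ} (hk : k ≤ n) (ht : ∑ j, t j = k) : t ⬝ᵥ c ≤ partialSum c k := by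
  obtain ⟨b, hb, hb'⟩ : ∃ b, (∀ j : Fin n, (j : ℕ) < k → b ≤ c j) ∧
      ∀ j : Fin n, ¬ (j : ℕ) < k → c j ≤ b := by
    rcases hk.lt_or_eq with hk | rfl
    · exact ⟨c ⟨k, hk⟩, fun j hj => hc (Fin.le_def.2 hj.le), fun j hj => hc (not_lt.1 hj)⟩
    · obtain ⟨b, hb⟩ := (Set.finite_range c).bddBelow
      exact ⟨b, fun j _ => hb ⟨j, rfl⟩, fun j hj => absurd j.2 hj⟩
  refine dotProduct_le_sum_of_sum_eq_card (F := univ.filter fun j : Fin n => (j : ℕ) < k) ht0 ht1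
    ?_ (by simpa using hb) (by simpa using hb')
  rw [ht, Fin.card_filter_val_lt, min_eq_right hk]

end Rearrangement

variable {n : ℕ}

/- With `a` the first nonzero entry, the nonzero entries run `a, -a, a, …`: the one following a
prefix is `a` or `-a` according as the prefix sum is `0` or `a`. -/
theorem AlternatesSign.partialSum_eq_zero_or_eq {v : Fin n → ℝ} (hv : AlternatesSign v) {a : ℝ}
    (ha : ∀ j, v j ≠ 0 → (∀ m < j, v m = 0) → v j = a) {k : ℕ} (hk : k ≤ n) :
    (partialSum v k = 0 ∨ partialSum v k = a) ∧
      ∀ j : Fin n, k ≤ j → v j ≠ 0 → (∀ m : Fin n, k ≤ m → m < j → v m = 0) →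
        v j = a - 2 * partialSum v k := by
  induction k with
  | zero =>
    refine ⟨Or.inl (partialSum_zero v), fun j _ hj hm => ?_⟩
    rw [partialSum_zero, mul_zero, sub_zero]
    exact ha j hj fun m hmj => hm m (Nat.zero_le _) hmj
  | succ k ih =>
    obtain ⟨hS, hnext⟩ := ih (Nat.le_of_succ_le hk)
    set p : Fin n := ⟨k, hk⟩
    rw [partialSum_succ v hk]
    by_cases hp : v p = 0
    · rw [hp, add_zero]
      refine ⟨hS, fun j hkj hj hm => hnext j (by omega) hj fun m hkm hmj => ?_⟩
      rcases hkm.eq_or_lt with h | h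
      · rwa [show m = p from Fin.ext h.symm]
      · exact hm m h hmj
    · have hvp : v p = a - 2 * partialSum v k :=
        hnext p le_rfl hp fun m h₁ h₂ => absurd h₂ (not_lt.2 (Fin.le_def.2 h₁))
      refine ⟨?_, fun j hkj hj hm => ?_⟩
      · rw [hvp]
        rcases hS with h | h <;> rw [h]
        · right; ring
        · left; ring
      · rw [hv p j (Fin.lt_def.2 hkj) hp hj fun m h₁ h₂ => hm m (Fin.lt_def.1 h₁) h₂, hvp]
        ring

theorem AlternatesSign.partialSum_eq_zero_or_eq_one {v : Fin n → ℝ} (hv : AlternatesSign v)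
    (hsum : ∑ i, v i = 1) (k : ℕ) : partialSum v k = 0 ∨ partialSum v k = 1 := by
  obtain ⟨j, -, hj⟩ := exists_ne_zero_of_sum_ne_zero (hsum ▸ one_ne_zero : ∑ i, v i ≠ 0)
  obtain ⟨j₀, hj₀⟩ := exists_minimal_of_wellFoundedLT (fun j => v j ≠ 0) ⟨j, hj⟩
  have ha : ∀ j, v j ≠ 0 → (∀ m < j, v m = 0) → v j = v j₀ := fun j hj hm => by
    have hle : j ≤ j₀ := not_lt.1 fun h => hj₀.1 (hm _ h)
    rw [le_antisymm hle (hj₀.2 hj hle)]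
  have hfirst : v j₀ = 1 := by
    have := (hv.partialSum_eq_zero_or_eq ha le_rfl).1
    rw [partialSum_of_le v le_rfl, hsum] at this
    norm_num at this
    exact this.symm
  rcases le_total k n with hk | hk
  · simpa [hfirst] using (hv.partialSum_eq_zero_or_eq ha hk).1
  · right
    rw [partialSum_of_le v hk, hsum]

namespace IsASM

variable {A : Matrix (Fin n) (Fin n) ℝ}

theorem partialSum_col_mem_Icc (hA : IsASM n A) (k : ℕ) (j : Fin n) :
    partialSum (fun i => A i j) k ∈ Set.Icc 0 1 := by
  rcases (hA.2.2.2.2 j).partialSum_eq_zero_or_eq_one (hA.2.2.1 j) k with h | h <;> simp [h]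

theorem sum_partialSum_col (hA : IsASM n A) {k : ℕ} (hk : k ≤ n) :
    ∑ j, partialSum (fun i => A i j) k = k := by
  simp only [partialSum]
  rw [sum_comm, sum_congr rfl fun i _ => hA.2.1 i, sum_const, Fin.card_filter_val_lt,
    min_eq_right hk, nsmul_one]

theorem dotProduct_mulVec_le (hA : IsASM n A) {z c : Fin n → ℝ} (hz : Antitone z)
    {σ : Equiv.Perm (Fin n)} (hc : Antitone (c ∘ σ)) : z ⬝ᵥ (A *ᵥ c) ≤ z ⬝ᵥ (c ∘ σ) := by
  refine dotProduct_le_dotProduct_of_partialSum_le hz (fun k hk => ?_) ?_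
  · rw [partialSum_mulVec, ← comp_equiv_dotProduct_comp_equiv _ _ σ]
    refine dotProduct_le_partialSum hc (fun j => (hA.partialSum_col_mem_Icc k _).1)
      (fun j => (hA.partialSum_col_mem_Icc k _).2) hk ?_
    rw [Equiv.sum_comp σ fun j => partialSum (fun i => A i j) k, hA.sum_partialSum_col hk]
  · have hcols : (1 : Fin n → ℝ) ᵥ* A = 1 := funext fun j => by
      simpa [vecMul, dotProduct] using hA.2.2.1 j
    rw [← one_dotProduct, dotProduct_mulVec, hcols, one_dotProduct]
    exact (Equiv.sum_comp σ c).symm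

end IsASM

theorem mem_convexHull_of_forall_exists_dotProduct_le {ι : Type*} [Fintype ι]
    {s : Set (ι → ℝ)} (hs : s.Finite) {x : ι → ℝ}
    (h : ∀ c : ι → ℝ, ∃ y ∈ s, x ⬝ᵥ c ≤ y ⬝ᵥ c) : x ∈ convexHull ℝ s := by
  classical
  by_contra hx
  obtain ⟨f, u, hfs, hfx⟩ :=
    geometric_hahn_banach_closed_point (convex_convexHull ℝ s) (hs.isClosed_convexHull ℝ) hx
  set c : ι → ℝ := fun i => f fun j => if i = j then 1 else 0
  have hf : ∀ v, f v = v ⬝ᵥ c := fun v => f.toLinearMap.pi_apply_eq_sum_univ v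
  obtain ⟨y, hy, hxy⟩ := h c
  have := hfs y (subset_convexHull ℝ s hy)
  rw [hf] at this hfx
  linarith

theorem alternatesSign_of_subsingleton_support {v : Fin n → ℝ}
    (hv : (Function.support v).Subsingleton) : AlternatesSign v :=
  fun _ _ hlt h₁ h₂ _ => absurd (hv h₁ h₂) hlt.ne

theorem isASM_permMatrix (ω : Equiv.Perm (Fin n)) : IsASM n (permMatrix n ω) := by
  refine ⟨fun i j => ?_, fun i => ?_, fun j => ?_, fun i => ?_, fun j => ?_⟩
  · by_cases h : ω i = j <;> simp [permMatrix, h]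
  · simp [permMatrix]
  · simp [permMatrix, ← Equiv.eq_symm_apply]
  · refine alternatesSign_of_subsingleton_support fun j₁ h₁ j₂ h₂ => ?_
    exact (ite_ne_right_iff.1 h₁).1.symm.trans (ite_ne_right_iff.1 h₂).1
  · refine alternatesSign_of_subsingleton_support fun i₁ h₁ i₂ h₂ => ?_
    exact ω.injective ((ite_ne_right_iff.1 h₁).1.trans (ite_ne_right_iff.1 h₂).1.symm)

theorem phiMap_eq_vecMul (z : Fin n → ℝ) (X : Matrix (Fin n) (Fin n) ℝ) :
    phiMap n z X = z ᵥ* X :=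
  rfl

theorem isLinearMap_phiMap (z : Fin n → ℝ) : IsLinearMap ℝ (phiMap n z) :=
  ⟨fun X Y => vecMul_add X Y z, fun r X => vecMul_smul z r X⟩

theorem phiMap_permMatrix (z : Fin n → ℝ) (ω : Equiv.Perm (Fin n)) :
    phiMap n z (permMatrix n ω) = z ∘ ω.symm := by
  funext j
  simp [phiMap, permMatrix, ← Equiv.eq_symm_apply]

theorem IsASM.phiMap_mem_permutohedron {A : Matrix (Fin n) (Fin n) ℝ} (hA : IsASM n A)
    {z : Fin n → ℝ} (hz : Antitone z) : phiMap n z A ∈ permutohedron n z := by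
  have hfin : {v : Fin n → ℝ | ∃ ω : Equiv.Perm (Fin n), v = z ∘ ω}.Finite :=
    (Set.finite_range fun ω : Equiv.Perm (Fin n) => z ∘ ω).subset fun _ ⟨ω, hω⟩ => ⟨ω, hω.symm⟩
  refine mem_convexHull_of_forall_exists_dotProduct_le hfin fun c => ?_
  set σ := Tuple.sort (-c)
  have hc : Antitone (c ∘ σ) := fun i j hij => by
    simpa using Tuple.monotone_sort (-c) hij
  refine ⟨z ∘ σ.symm, ⟨σ.symm, rfl⟩, ?_⟩
  rw [phiMap_eq_vecMul, ← dotProduct_mulVec, comp_equiv_symm_dotProduct]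
  exact hA.dotProduct_mulVec_le hz hc

/-- For a strictly decreasing vector `z`, the image of the alternating sign
matrix polytope under `φ_z` is the permutohedron `P_z`. -/
theorem phi_image_asmPolytope (n : ℕ) (z : Fin n → ℝ) (hz : StrictAnti z) :
    phiMap n z '' ASMPolytope n = permutohedron n z := by
  rw [ASMPolytope, (isLinearMap_phiMap z).image_convexHull]
  refine subset_antisymm (convexHull_min ?_ (convex_convexHull ℝ _)) (convexHull_mono ?_)
  · rintro _ ⟨A, hA, rfl⟩
    exact hA.phiMap_mem_permutohedron hz.antitone
  · rintro _ ⟨ω, rfl⟩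
    exact ⟨permMatrix n ω.symm, isASM_permMatrix ω.symm, phiMap_permMatrix z ω.symm⟩
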